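/- For every 𝒯 > 0, every δ > 0 and every unit vector λ = (λ₁,λ₂) ∈ ℝ², lim_{N→∞} P[ sup_{t∈[0,𝒯]} |λ₁ Z_N^{1>}(t) + λ₂ Z_N^{2>}(t)| > δ ] = 0. -/

import Mathlib

open MeasureTheory Real Filter Set
open scoped ENNReal NNReal

noncomputable section

instance : Fact ((0:ℝ) < 1) := ⟨one_pos⟩

/-- The one-dimensional torus `ℝ/ℤ`. -/
abbrev Torus := AddCircle (1 : ℝ)

/-- The two-dimensional torus `𝕋²`. -/
abbrev T2 := Torus × Torus

lemma sin_sq_periodic : Function.Periodic (fun x : ℝ => Real.sin (π * x) ^ 2) 1 := by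
  intro x
  simp only []
  have h : π * (x + 1) = π * x + π := by ring
  rw [h, Real.sin_add_pi]
  ring

lemma sincos_periodic :
    Function.Periodic (fun x : ℝ => Real.sin (π * x) * Real.cos (π * x)) 1 := by
  intro x
  simp only []
  have h : π * (x + 1) = π * x + π := by ring
  rw [h, Real.sin_add_pi, Real.cos_add_pi]
  ring

/-- `sin²(π k)` as a function on the circle. -/
def sin2 : Torus → ℝ := sin_sq_periodic.lift

/-- `sin(π k) cos(π k)` as a function on the circle. -/
def sincos : Torus → ℝ := sincos_periodic.lift

/-- The components of a point of the torus. -/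
def tcomp (k : T2) : Fin 2 → Torus := ![k.1, k.2]

/-- `Φ(k) = 8 ∑_α sin²(π k_α)`. -/
def Phi (k : T2) : ℝ := 8 * (sin2 k.1 + sin2 k.2)

/-- The scattering kernel `R(k,k') = 16 ∑_α sin²(π k_α) sin²(π k'_α)`. -/
def Rker (k k' : T2) : ℝ := 16 * (sin2 k.1 * sin2 k'.1 + sin2 k.2 * sin2 k'.2)

/-- The velocity `v_α(k) = sin(π k_α) cos(π k_α) / (∑_β sin²(π k_β))^{1/2}`. -/
def vel (α : Fin 2) (k : T2) : ℝ :=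
  sincos (tcomp k α) / Real.sqrt (sin2 k.1 + sin2 k.2)

/-- `ψ(k) = Φ(k)⁻¹ v(k)`. -/
def psiC (α : Fin 2) (k : T2) : ℝ := vel α k / Phi k

/-- The Markov transition kernel `P(k,dk') = Φ(k)⁻¹ R(k,k') dk'` on `𝕋²`. -/
def Pker (k : T2) : Measure T2 :=
  (volume : Measure T2).withDensity fun k' => ENNReal.ofReal ((Phi k)⁻¹ * Rker k k')

/-- The `m`-step kernel (`Pn 0 k` is the Dirac mass at `k`). -/
def Pn : ℕ → T2 → Measure T2
  | 0, k => Measure.dirac k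
  | (m + 1), k => (Pn m k).bind Pker

/-- The measure `π(dk) = (1/8) Φ(k) dk`. -/
def piM : Measure T2 :=
  (volume : Measure T2).withDensity fun k => ENNReal.ofReal ((1 / 8) * Phi k)

/-- The exponential distribution with mean one. -/
def expMeasure : Measure ℝ :=
  (volume : Measure ℝ).withDensity fun z =>
    if 0 ≤ z then ENNReal.ofReal (Real.exp (-z)) else 0


/-- `σ²`, defined as the limit
`lim_N (1/ln N) E_π[|e₁ψ¹(X₁)|² 𝟙{|e₁ψ¹(X₁)| ≤ √N}]`
(which the paper shows exists and equals `1/(128π)`). -/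
def sigma2 : ℝ := limUnder atTop fun N : ℕ =>
  (Real.log N)⁻¹ * ∫ k, (∫ z in Set.Ioi (0:ℝ),
    Real.exp (-z) * (z * psiC 0 k) ^ 2 *
      (if z * |psiC 0 k| ≤ Real.sqrt N then 1 else 0)) ∂piM

/-- A realization, on a probability space `Ω`, of the Markov chain `(X_n)_{n≥0}` on `𝕋²`
with transition kernel `P` and initial distribution `μ0` not concentrated at `k = 0`,
together with i.i.d. mean-one exponential random variables `(e_n)_{n≥0}` independent of
the chain. -/
structure ChainSetup (Ω : Type) [MeasurableSpace Ω] where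
  Pr : Measure Ω
  hprob : IsProbabilityMeasure Pr
  μ0 : Measure T2
  hμ0 : IsProbabilityMeasure μ0
  hμ0small : ∀ ε : ℝ, 0 < ε → ∃ δ : ℝ, 0 < δ ∧
    μ0 {k : T2 | ‖k‖ < δ} < ENNReal.ofReal ε
  X : ℕ → Ω → T2
  e : ℕ → Ω → ℝ
  hX : ∀ n, Measurable (X n)
  he : ∀ n, Measurable (e n)
  hinit : Measure.map (X 0) Pr = μ0
  hMarkov : ∀ (n : ℕ) (F : (Fin (n + 1) → T2) → ℝ≥0∞) (g : T2 → ℝ≥0∞),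
    Measurable F → Measurable g →
    ∫⁻ ω, F (fun i => X i ω) * g (X (n + 1) ω) ∂Pr
      = ∫⁻ ω, F (fun i => X i ω) * ∫⁻ k', g k' ∂(Pker (X n ω)) ∂Pr
  heLaw : ∀ n, Measure.map (e n) Pr = expMeasure
  heIndep : ProbabilityTheory.iIndepFun
    (m := fun _ : ℕ => (inferInstance : MeasurableSpace ℝ)) e Pr
  hXe : ProbabilityTheory.IndepFun
    (fun ω (i : ℕ) => X i ω) (fun ω (i : ℕ) => e i ω) Pr

variable {Ω : Type} [MeasurableSpace Ω]

/-- The position `S_n = ∑_{ℓ<n} e_ℓ ψ(X_ℓ)` (component `α`). -/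
def Svec (S : ChainSetup Ω) (α : Fin 2) (n : ℕ) (ω : Ω) : ℝ :=
  ∑ ℓ ∈ Finset.range n, S.e ℓ ω * psiC α (S.X ℓ ω)

/-- The clock `T_n = ∑_{ℓ<n} e_ℓ Φ(X_ℓ)⁻¹`. -/
def Tclock (S : ChainSetup Ω) (n : ℕ) (ω : Ω) : ℝ :=
  ∑ ℓ ∈ Finset.range n, S.e ℓ ω * (Phi (S.X ℓ ω))⁻¹

/-- The scaling constant `(N ln N)^{-1/2}`. -/
def cscale (N : ℕ) : ℝ := (Real.sqrt (N * Real.log N))⁻¹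

/-- The extremal part `Z_N^{α>}(t)`. -/
def ZgtVal (S : ChainSetup Ω) (N : ℕ) (α : Fin 2) (t : ℝ) (ω : Ω) : ℝ :=
  cscale N * ((∑ n ∈ Finset.range ⌊(N : ℝ) * t⌋₊,
      S.e n ω * psiC α (S.X n ω) *
        (if Real.sqrt N < S.e n ω * |psiC α (S.X n ω)| then 1 else 0))
    + ((N : ℝ) * t - ⌊(N : ℝ) * t⌋₊) * S.e ⌊(N : ℝ) * t⌋₊ ω *
        psiC α (S.X ⌊(N : ℝ) * t⌋₊ ω) *
        (if Real.sqrt N < S.e ⌊(N : ℝ) * t⌋₊ ω * |psiC α (S.X ⌊(N : ℝ) * t⌋₊ ω)|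
          then 1 else 0))

/-- The central part `Z_N^{α<}(t)`. -/
def ZltVal (S : ChainSetup Ω) (N : ℕ) (α : Fin 2) (t : ℝ) (ω : Ω) : ℝ :=
  cscale N * ((∑ n ∈ Finset.range ⌊(N : ℝ) * t⌋₊,
      S.e n ω * psiC α (S.X n ω) *
        (if S.e n ω * |psiC α (S.X n ω)| ≤ Real.sqrt N then 1 else 0))
    + ((N : ℝ) * t - ⌊(N : ℝ) * t⌋₊) * S.e ⌊(N : ℝ) * t⌋₊ ω *
        psiC α (S.X ⌊(N : ℝ) * t⌋₊ ω) *
        (if S.e ⌊(N : ℝ) * t⌋₊ ω * |psiC α (S.X ⌊(N : ℝ) * t⌋₊ ω)| ≤ Real.sqrt N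
          then 1 else 0))

/-!
A jump is extremal only if `e_n |ψ(X_n)| > √N`, and `|ψ(k)| ≤ (8 ∑_α sin²(π k_α))⁻¹ ≲ |k|⁻²`.
For `n = 0`, where the law `μ` of `X_0` is arbitrary, this forces `X_0` close to `0` (improbable
by the assumption on `μ`) or `e_0 ≳ √N`. For `n ≥ 1` the law of `X_n` has density at most
`2 ∑_α sin²(π k_α)`, which compensates the singularity of `ψ`; with the exponential tail of `e_n`
this gives `E[e_n |ψ(X_n)|; e_n |ψ(X_n)| > √N] ≤ ∫ exp(-4√N ∑_α sin²(π k_α)) dk ≤ π / (16 √N)`.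
So the `⌊N𝒯⌋` extremal jumps with `n ≥ 1` have total size `O(𝒯 √N)` in expectation, which the
scaling `(N ln N)^{-1/2}` turns into `O((ln N)^{-1/2})`, and Markov's inequality concludes.
-/

open scoped Topology

lemma sin2_coe (x : ℝ) : sin2 x = sin (π * x) ^ 2 := rfl

lemma sincos_coe (x : ℝ) : sincos x = sin (π * x) * cos (π * x) := rfl

lemma sin2_nonneg (x : Torus) : 0 ≤ sin2 x :=
  QuotientAddGroup.induction_on x fun r => by rw [sin2_coe]; positivity

lemma sincos_sq_le_sin2 (x : Torus) : sincos x ^ 2 ≤ sin2 x :=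
  QuotientAddGroup.induction_on x fun r => by
    rw [sin2_coe, sincos_coe, mul_pow]
    exact mul_le_of_le_one_right (sq_nonneg _) (cos_sq_le_one _)

@[fun_prop]
lemma continuous_sin2 : Continuous sin2 := Continuous.quotient_liftOn' (by fun_prop) _

lemma continuous_sincos : Continuous sincos := Continuous.quotient_liftOn' (by fun_prop) _

lemma four_mul_sq_le_sin_pi_mul_sq {a : ℝ} (ha : |a| ≤ 1 / 2) : 4 * a ^ 2 ≤ sin (π * a) ^ 2 := by
  have h := mul_abs_le_abs_sin (x := π * a) (by
    rw [abs_mul, abs_of_pos pi_pos]; nlinarith [pi_pos])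
  rw [abs_mul, abs_of_pos pi_pos, ← mul_assoc, div_mul_cancel₀ _ pi_ne_zero] at h
  calc 4 * a ^ 2 = (2 * |a|) ^ 2 := by rw [mul_pow, sq_abs]; norm_num
    _ ≤ |sin (π * a)| ^ 2 := pow_le_pow_left₀ (by positivity) h 2
    _ = sin (π * a) ^ 2 := sq_abs _

lemma four_mul_norm_sq_le_sin2 (x : Torus) : 4 * ‖x‖ ^ 2 ≤ sin2 x :=
  QuotientAddGroup.induction_on x fun r => by
    rw [UnitAddCircle.norm_eq, sin2_coe, ← sin_sq_periodic.sub_int_mul_eq (round r)]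
    simpa using four_mul_sq_le_sin_pi_mul_sq (abs_sub_round r)

def sinSqSum (k : T2) : ℝ := sin2 k.1 + sin2 k.2

lemma sinSqSum_nonneg (k : T2) : 0 ≤ sinSqSum k := add_nonneg (sin2_nonneg _) (sin2_nonneg _)

lemma measurable_sinSqSum : Measurable sinSqSum :=
  ((continuous_sin2.comp continuous_fst).add (continuous_sin2.comp continuous_snd)).measurable

lemma four_mul_norm_sq_le_sinSqSum (k : T2) : 4 * ‖k‖ ^ 2 ≤ sinSqSum k := by
  rw [Prod.norm_def, sinSqSum]
  rcases max_cases ‖k.1‖ ‖k.2‖ with ⟨h, -⟩ | ⟨h, -⟩ <;> rw [h]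
  · linarith [four_mul_norm_sq_le_sin2 k.1, sin2_nonneg k.2]
  · linarith [four_mul_norm_sq_le_sin2 k.2, sin2_nonneg k.1]

lemma sincos_tcomp_sq_le_sinSqSum (α : Fin 2) (k : T2) : sincos (tcomp k α) ^ 2 ≤ sinSqSum k := by
  fin_cases α
  · exact (sincos_sq_le_sin2 _).trans (le_add_of_nonneg_right (sin2_nonneg _))
  · exact (sincos_sq_le_sin2 _).trans (le_add_of_nonneg_left (sin2_nonneg _))

lemma measurable_psiC (α : Fin 2) : Measurable (psiC α) := by
  have hsc : Measurable fun k : T2 => sincos (tcomp k α) := by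
    fin_cases α
    · exact (continuous_sincos.comp continuous_fst).measurable
    · exact (continuous_sincos.comp continuous_snd).measurable
  exact (hsc.div (continuous_sqrt.measurable.comp measurable_sinSqSum)).div
    (measurable_const.mul measurable_sinSqSum)

lemma abs_psiC_le (α : Fin 2) (k : T2) : |psiC α k| ≤ (8 * sinSqSum k)⁻¹ := by
  have hψ : psiC α k = sincos (tcomp k α) / (√(sinSqSum k) * (8 * sinSqSum k)) := by
    rw [psiC, vel, Phi, div_div]; rfl
  have hden : 0 ≤ √(sinSqSum k) * (8 * sinSqSum k) := by
    have := sinSqSum_nonneg k; positivity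
  rw [hψ, abs_div, abs_of_nonneg hden]
  rcases (sinSqSum_nonneg k).eq_or_lt with h | h
  · simp [← h]
  · calc _ ≤ √(sinSqSum k) / (√(sinSqSum k) * (8 * sinSqSum k)) :=
          div_le_div_of_nonneg_right (abs_le_sqrt (sincos_tcomp_sq_le_sinSqSum α k)) hden
      _ = (8 * sinSqSum k)⁻¹ := div_mul_cancel_left₀ (by positivity) _

lemma eight_mul_abs_psiC_mul_sinSqSum_le_one (α : Fin 2) (k : T2) :
    8 * (|psiC α k| * sinSqSum k) ≤ 1 := by
  rcases (sinSqSum_nonneg k).eq_or_lt with h | h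
  · simp [← h]
  · calc 8 * (|psiC α k| * sinSqSum k) = |psiC α k| * (8 * sinSqSum k) := by ring
      _ ≤ (8 * sinSqSum k)⁻¹ * (8 * sinSqSum k) :=
          mul_le_mul_of_nonneg_right (abs_psiC_le α k) (by positivity)
      _ = 1 := inv_mul_cancel₀ (by positivity)

lemma measurable_expDensity :
    Measurable fun z : ℝ => if 0 ≤ z then ENNReal.ofReal (exp (-z)) else 0 :=
  Measurable.ite measurableSet_Ici (by fun_prop) measurable_const

instance : SFinite expMeasure := by unfold expMeasure; infer_instance

lemma expMeasure_Ioi {c : ℝ} (hc : 0 ≤ c) : expMeasure (Ioi c) = ENNReal.ofReal (exp (-c)) := by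
  rw [expMeasure, withDensity_apply _ measurableSet_Ioi,
    setLIntegral_congr_fun measurableSet_Ioi fun z hz => if_pos (hc.trans (le_of_lt hz)),
    ← ofReal_integral_eq_lintegral_ofReal
      (by simpa [IntegrableOn] using exp_neg_integrableOn_Ioi c one_pos)
      (.of_forall fun z => (exp_pos _).le), integral_exp_neg_Ioi]

lemma lintegral_indicator_Ioi_mul_expMeasure_le {a s : ℝ} (ha : 0 < a) (hs : 0 ≤ s) :
    ∫⁻ z, ENNReal.ofReal ((Ioi s).indicator id (z * a)) ∂expMeasure
      ≤ ENNReal.ofReal (4 * a * exp (-(s / (2 * a)))) := by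
  have hmeas : Measurable fun z : ℝ => ENNReal.ofReal ((Ioi s).indicator id (z * a)) :=
    ((measurable_id.indicator measurableSet_Ioi).comp (measurable_id.mul_const a)).ennreal_ofReal
  -- `z e^{-z} ≤ 2 e^{-z/2}` on the range `z > s / a` of the indicator
  have hpoint : ∀ z : ℝ, (if 0 ≤ z then ENNReal.ofReal (exp (-z)) else 0) *
      ENNReal.ofReal ((Ioi s).indicator id (z * a))
      ≤ (Ioi (s / a)).indicator (fun z => ENNReal.ofReal (2 * a * exp (-(1 / 2) * z))) z := by
    intro z
    by_cases hz : s < z * a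
    · have hz' : s / a < z := (div_lt_iff₀ ha).mpr hz
      have hz0 : 0 ≤ z := (div_nonneg hs ha.le).trans hz'.le
      rw [if_pos hz0, indicator_of_mem (mem_Ioi.mpr hz), indicator_of_mem (mem_Ioi.mpr hz'),
        id, ← ENNReal.ofReal_mul (exp_nonneg _)]
      refine ENNReal.ofReal_le_ofReal ?_
      have hlin : z ≤ 2 * exp (z / 2) := by linarith [add_one_le_exp (z / 2)]
      calc exp (-z) * (z * a) = a * (z * exp (-z)) := by ring
        _ ≤ a * (2 * exp (z / 2) * exp (-z)) := by gcongr
        _ = 2 * a * exp (-(1 / 2) * z) := by rw [mul_assoc 2, ← exp_add]; ring_nf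
    · simp [indicator_of_notMem (show z * a ∉ Ioi s from hz)]
  have hint : IntegrableOn (fun z => 2 * a * exp (-(1 / 2) * z)) (Ioi (s / a)) :=
    (integrableOn_exp_mul_Ioi (by norm_num) _).const_mul _
  calc ∫⁻ z, ENNReal.ofReal ((Ioi s).indicator id (z * a)) ∂expMeasure
      = ∫⁻ z, (if 0 ≤ z then ENNReal.ofReal (exp (-z)) else 0) *
          ENNReal.ofReal ((Ioi s).indicator id (z * a)) :=
        lintegral_withDensity_eq_lintegral_mul _ measurable_expDensity hmeas
    _ ≤ ∫⁻ z in Ioi (s / a), ENNReal.ofReal (2 * a * exp (-(1 / 2) * z)) :=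
        (lintegral_mono hpoint).trans_eq (lintegral_indicator measurableSet_Ioi _)
    _ = ENNReal.ofReal (4 * a * exp (-(s / (2 * a)))) := by
        rw [← ofReal_integral_eq_lintegral_ofReal hint (.of_forall fun z => by positivity),
          integral_const_mul, integral_exp_mul_Ioi (by norm_num)]
        congr 1
        field_simp
        ring_nf

lemma lintegral_exp_neg_mul_sin2_le {c : ℝ} (hc : 0 < c) :
    ∫⁻ x : Torus, ENNReal.ofReal (exp (-(c * sin2 x))) ≤ ENNReal.ofReal √(π / (4 * c)) := by
  rw [← AddCircle.lintegral_preimage (1 : ℝ) (-(1 / 2)), show -(1 / 2 : ℝ) + 1 = 1 / 2 by norm_num]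
  have hgauss : ∀ a ∈ Ioc (-(1 / 2) : ℝ) (1 / 2),
      ENNReal.ofReal (exp (-(c * sin2 a))) ≤ ENNReal.ofReal (exp (-(4 * c) * a ^ 2)) := by
    intro a ha
    have := four_mul_sq_le_sin_pi_mul_sq (abs_le.mpr ⟨ha.1.le, ha.2⟩)
    gcongr
    rw [sin2_coe]
    nlinarith
  calc ∫⁻ a in Ioc (-(1 / 2) : ℝ) (1 / 2), ENNReal.ofReal (exp (-(c * sin2 a)))
      ≤ ∫⁻ a in Ioc (-(1 / 2) : ℝ) (1 / 2), ENNReal.ofReal (exp (-(4 * c) * a ^ 2)) :=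
        setLIntegral_mono (by fun_prop) hgauss
    _ ≤ ∫⁻ a, ENNReal.ofReal (exp (-(4 * c) * a ^ 2)) := setLIntegral_le_lintegral _ _
    _ = ENNReal.ofReal √(π / (4 * c)) := by
        rw [← ofReal_integral_eq_lintegral_ofReal (integrable_exp_neg_mul_sq (by positivity))
          (.of_forall fun a => (exp_pos _).le), integral_gaussian]

lemma lintegral_exp_neg_mul_sinSqSum_le {c : ℝ} (hc : 0 < c) :
    ∫⁻ k : T2, ENNReal.ofReal (exp (-(c * sinSqSum k))) ≤ ENNReal.ofReal (π / (4 * c)) := by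
  have hsplit : ∀ k : T2, ENNReal.ofReal (exp (-(c * sinSqSum k)))
      = ENNReal.ofReal (exp (-(c * sin2 k.1))) * ENNReal.ofReal (exp (-(c * sin2 k.2))) := by
    intro k
    rw [← ENNReal.ofReal_mul (exp_nonneg _), ← exp_add, sinSqSum, mul_add, neg_add]
  have hmeas : Measurable fun x : Torus => ENNReal.ofReal (exp (-(c * sin2 x))) :=
    (continuous_sin2.const_mul c).neg.rexp.measurable.ennreal_ofReal
  simp only [hsplit]
  rw [Measure.volume_eq_prod, lintegral_prod_mul hmeas.aemeasurable hmeas.aemeasurable,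
    ← mul_self_sqrt (by positivity : 0 ≤ π / (4 * c)), ENNReal.ofReal_mul (sqrt_nonneg _)]
  exact mul_le_mul' (lintegral_exp_neg_mul_sin2_le hc) (lintegral_exp_neg_mul_sin2_le hc)

lemma inv_Phi_mul_Rker_le (k k' : T2) : (Phi k)⁻¹ * Rker k k' ≤ 2 * sinSqSum k' := by
  have h₁ := sin2_nonneg k.1; have h₂ := sin2_nonneg k.2
  have h₁' := sin2_nonneg k'.1; have h₂' := sin2_nonneg k'.2
  rcases (add_nonneg h₁ h₂).eq_or_lt with h | h
  · simp only [Phi, ← h, mul_zero, inv_zero, zero_mul]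
    exact mul_nonneg zero_le_two (sinSqSum_nonneg k')
  · rw [Phi, Rker, sinSqSum, inv_mul_le_iff₀ (by positivity)]
    nlinarith [mul_nonneg h₁ h₂', mul_nonneg h₂ h₁']

lemma lintegral_Pker_le (k : T2) {f : T2 → ℝ≥0∞} (hf : Measurable f) :
    ∫⁻ k', f k' ∂Pker k ≤ ∫⁻ k', f k' * ENNReal.ofReal (2 * sinSqSum k') := by
  have hdens : Measurable fun k' => ENNReal.ofReal ((Phi k)⁻¹ * Rker k k') := by
    unfold Rker
    fun_prop
  rw [Pker, lintegral_withDensity_eq_lintegral_mul _ hdens hf]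
  refine lintegral_mono fun k' => ?_
  rw [Pi.mul_apply, mul_comm]
  exact mul_le_mul_right (ENNReal.ofReal_le_ofReal (inv_Phi_mul_Rker_le k k')) _

lemma cscale_nonneg (N : ℕ) : 0 ≤ cscale N := inv_nonneg.mpr (sqrt_nonneg _)

lemma lintegral_indicator_mul_abs_psiC_mul_le (α : Fin 2) (k : T2) {s : ℝ} (hs : 0 ≤ s) :
    (∫⁻ z, ENNReal.ofReal ((Ioi s).indicator id (z * |psiC α k|)) ∂expMeasure) *
        ENNReal.ofReal (2 * sinSqSum k)
      ≤ ENNReal.ofReal (exp (-(4 * s * sinSqSum k))) := by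
  rcases (abs_nonneg (psiC α k)).eq_or_lt with h | ha
  · simp [← h, indicator_of_notMem (show (0 : ℝ) ∉ Ioi s from not_lt.mpr hs)]
  have hau := eight_mul_abs_psiC_mul_sinSqSum_le_one α k
  have hexp : exp (-(s / (2 * |psiC α k|))) ≤ exp (-(4 * s * sinSqSum k)) := by
    gcongr
    rw [le_div_iff₀ (by positivity)]
    nlinarith
  calc _ ≤ ENNReal.ofReal (4 * |psiC α k| * exp (-(s / (2 * |psiC α k|)))) *
        ENNReal.ofReal (2 * sinSqSum k) := by
        gcongr
        exact lintegral_indicator_Ioi_mul_expMeasure_le ha hs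
    _ = ENNReal.ofReal (8 * (|psiC α k| * sinSqSum k) * exp (-(s / (2 * |psiC α k|)))) := by
        rw [← ENNReal.ofReal_mul (by positivity)]
        ring_nf
    _ ≤ ENNReal.ofReal (exp (-(4 * s * sinSqSum k))) :=
        ENNReal.ofReal_le_ofReal ((mul_le_of_le_one_left (exp_nonneg _) hau).trans hexp)

lemma mul_abs_psiC_le_of_le_norm (α : Fin 2) {k : T2} {δ' s z : ℝ} (hδ' : 0 < δ')
    (hk : δ' ≤ ‖k‖) (hs : 0 ≤ s) (hz : z ≤ 32 * δ' ^ 2 * s) : z * |psiC α k| ≤ s := by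
  have hu : 4 * δ' ^ 2 ≤ sinSqSum k :=
    le_trans (by gcongr : 4 * δ' ^ 2 ≤ 4 * ‖k‖ ^ 2) (four_mul_norm_sq_le_sinSqSum k)
  have hψ : |psiC α k| ≤ (32 * δ' ^ 2)⁻¹ :=
    (abs_psiC_le α k).trans (inv_anti₀ (by positivity) (by linarith))
  rcases le_or_gt z 0 with hz0 | hz0
  · exact (mul_nonpos_of_nonpos_of_nonneg hz0 (abs_nonneg _)).trans hs
  · calc z * |psiC α k| ≤ 32 * δ' ^ 2 * s * (32 * δ' ^ 2)⁻¹ :=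
          mul_le_mul hz hψ (abs_nonneg _) (by positivity)
      _ = s := by field_simp

lemma abs_mul_mul_ite_lt {s : ℝ} (hs : 0 ≤ s) (z y : ℝ) :
    |z * y * (if s < z * |y| then 1 else 0)| = (Ioi s).indicator id (z * |y|) := by
  split_ifs with h
  · have hz : 0 ≤ z := (pos_of_mul_pos_left (hs.trans_lt h) (abs_nonneg y)).le
    rw [mul_one, indicator_of_mem (mem_Ioi.mpr h), id, abs_mul, abs_of_nonneg hz]
  · rw [mul_zero, abs_zero, indicator_of_notMem (show z * |y| ∉ Ioi s from h)]

lemma abs_sum_range_add_mul_le {a b : ℕ → ℝ} (hab : ∀ n, |a n| ≤ b n) {θ : ℝ} (hθ₀ : 0 ≤ θ)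
    (hθ₁ : θ ≤ 1) {m M : ℕ} (hmM : m ≤ M) :
    |∑ n ∈ Finset.range m, a n + θ * a m| ≤ ∑ n ∈ Finset.range (M + 1), b n := by
  have hb : ∀ n, 0 ≤ b n := fun n => (abs_nonneg _).trans (hab n)
  calc |∑ n ∈ Finset.range m, a n + θ * a m|
      ≤ |∑ n ∈ Finset.range m, a n| + |θ * a m| := abs_add_le _ _
    _ ≤ ∑ n ∈ Finset.range m, b n + b m := by
        rw [abs_mul, abs_of_nonneg hθ₀]
        gcongr ?_ + ?_
        · exact (Finset.abs_sum_le_sum_abs _ _).trans (Finset.sum_le_sum fun n _ => hab n)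
        · exact (mul_le_of_le_one_left (abs_nonneg _) hθ₁).trans (hab m)
    _ = ∑ n ∈ Finset.range (m + 1), b n := (Finset.sum_range_succ _ m).symm
    _ ≤ ∑ n ∈ Finset.range (M + 1), b n :=
        Finset.sum_le_sum_of_subset_of_nonneg (Finset.range_subset_range.mpr (by omega))
          fun n _ _ => hb n

lemma abs_le_one_of_sum_sq_eq_one {ι : Type*} [Fintype ι] {lam : ι → ℝ}
    (h : ∑ i, lam i ^ 2 = 1) (i : ι) : |lam i| ≤ 1 := by
  rw [← sq_le_one_iff_abs_le_one, ← h]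
  exact Finset.single_le_sum (fun j _ => sq_nonneg (lam j)) (Finset.mem_univ i)

lemma cscale_mul_floor_div_sqrt_le {𝒯 : ℝ} (h𝒯 : 0 ≤ 𝒯) (N : ℕ) :
    cscale N * (⌊(N : ℝ) * 𝒯⌋₊ / √N) ≤ 𝒯 / √(log N) := by
  rcases N.eq_zero_or_pos with rfl | hN
  · simp [cscale]
  have hfloor : (⌊(N : ℝ) * 𝒯⌋₊ : ℝ) / N ≤ 𝒯 :=
    div_le_of_le_mul₀ (Nat.cast_nonneg _) h𝒯
      ((Nat.floor_le (by positivity)).trans_eq (mul_comm _ _))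
  calc cscale N * (⌊(N : ℝ) * 𝒯⌋₊ / √N) = (⌊(N : ℝ) * 𝒯⌋₊ : ℝ) / N / √(log N) := by
        have : (0 : ℝ) < √N := by positivity
        rw [cscale, sqrt_mul (Nat.cast_nonneg _)]
        field_simp
        rw [sq_sqrt (Nat.cast_nonneg _)]
    _ ≤ 𝒯 / √(log N) := div_le_div_of_nonneg_right hfloor (sqrt_nonneg _)

lemma tendsto_zero_of_forall_eventually_le_ofReal_add {ι : Type*} {l : Filter ι} {u : ι → ℝ≥0∞}
    (h : ∀ ε : ℝ, 0 < ε →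
      ∃ v : ι → ℝ≥0∞, Tendsto v l (𝓝 0) ∧ ∀ᶠ i in l, u i ≤ ENNReal.ofReal ε + v i) :
    Tendsto u l (𝓝 0) := by
  rw [ENNReal.tendsto_nhds_zero]
  intro ε hε
  obtain ⟨r, -, hr₀, hrε⟩ := ENNReal.lt_iff_exists_real_btwn.mp hε
  have hr : 0 < r / 2 := by have := ENNReal.ofReal_pos.mp hr₀; positivity
  obtain ⟨v, hv, hle⟩ := h (r / 2) hr
  filter_upwards [hle, hv.eventually_lt_const (ENNReal.ofReal_pos.mpr hr)] with i hu hv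
  calc u i ≤ ENNReal.ofReal (r / 2) + ENNReal.ofReal (r / 2) := hu.trans (by gcongr)
    _ = ENNReal.ofReal r := by rw [← ENNReal.ofReal_add hr.le hr.le, add_halves]
    _ ≤ ε := hrε.le

lemma tendsto_ofReal_exp_neg_mul_sqrt_add_ofReal_div_sqrt_log {c d : ℝ} (hd : 0 < d) :
    Tendsto (fun N : ℕ => ENNReal.ofReal (exp (-(d * √N))) + ENNReal.ofReal (c / √(log N)))
      atTop (𝓝 0) := by
  have hexp : Tendsto (fun N : ℕ => exp (-(d * √N))) atTop (𝓝 0) :=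
    tendsto_exp_neg_atTop_nhds_zero.comp
      ((tendsto_sqrt_atTop.comp tendsto_natCast_atTop_atTop).const_mul_atTop hd)
  have hlog : Tendsto (fun N : ℕ => c / √(log N)) atTop (𝓝 0) :=
    tendsto_const_nhds.div_atTop
      (tendsto_sqrt_atTop.comp (tendsto_log_atTop.comp tendsto_natCast_atTop_atTop))
  simpa using (ENNReal.tendsto_ofReal hexp).add (ENNReal.tendsto_ofReal hlog)

namespace ChainSetup

variable (S : ChainSetup Ω) (N : ℕ)

lemma lintegral_comp_X_succ_le (n : ℕ) {f : T2 → ℝ≥0∞} (hf : Measurable f) :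
    ∫⁻ ω, f (S.X (n + 1) ω) ∂S.Pr ≤ ∫⁻ k, f k * ENNReal.ofReal (2 * sinSqSum k) := by
  have := S.hprob
  have hstep := S.hMarkov n (fun _ => 1) f measurable_const hf
  simp only [one_mul] at hstep
  rw [hstep]
  exact (lintegral_mono fun ω => lintegral_Pker_le _ hf).trans_eq (by simp)

lemma lintegral_comp_X_e (n : ℕ) {g : T2 × ℝ → ℝ≥0∞} (hg : Measurable g) :
    ∫⁻ ω, g (S.X n ω, S.e n ω) ∂S.Pr = ∫⁻ ω, ∫⁻ z, g (S.X n ω, z) ∂expMeasure ∂S.Pr := by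
  have := S.hprob
  have hindep : ProbabilityTheory.IndepFun (S.X n) (S.e n) S.Pr :=
    S.hXe.comp (measurable_pi_apply n) (measurable_pi_apply n)
  have hlaw : S.Pr.map (fun ω => (S.X n ω, S.e n ω)) = (S.Pr.map (S.X n)).prod expMeasure := by
    rw [← S.heLaw n]
    exact (ProbabilityTheory.indepFun_iff_map_prod_eq_prod_map_map
      (S.hX n).aemeasurable (S.he n).aemeasurable).mp hindep
  rw [← lintegral_map hg ((S.hX n).prodMk (S.he n)), hlaw, lintegral_prod _ hg.aemeasurable,
    lintegral_map hg.lintegral_prod_right' (S.hX n)]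

def extremalJump (α : Fin 2) (n : ℕ) (ω : Ω) : ℝ :=
  (Ioi √N).indicator id (S.e n ω * |psiC α (S.X n ω)|)

lemma extremalJump_nonneg (α : Fin 2) (n : ℕ) (ω : Ω) : 0 ≤ S.extremalJump N α n ω :=
  indicator_nonneg (fun _ hx => (sqrt_nonneg _).trans (le_of_lt hx)) _

lemma measurable_extremalJump (α : Fin 2) (n : ℕ) : Measurable (S.extremalJump N α n) :=
  (measurable_id.indicator measurableSet_Ioi).comp
    ((S.he n).mul ((measurable_psiC α).comp (S.hX n)).abs)

lemma abs_ZgtVal_le {t 𝒯 : ℝ} (ht : t ∈ Icc 0 𝒯) (α : Fin 2) (ω : Ω) :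
    |ZgtVal S N α t ω|
      ≤ cscale N * ∑ n ∈ Finset.range (⌊(N : ℝ) * 𝒯⌋₊ + 1), S.extremalJump N α n ω := by
  set a : ℕ → ℝ := fun n => S.e n ω * psiC α (S.X n ω) *
    (if √N < S.e n ω * |psiC α (S.X n ω)| then 1 else 0)
  set m := ⌊(N : ℝ) * t⌋₊
  have hNt : 0 ≤ (N : ℝ) * t := mul_nonneg (Nat.cast_nonneg _) ht.1
  have hZ : ZgtVal S N α t ω =
      cscale N * (∑ n ∈ Finset.range m, a n + ((N : ℝ) * t - m) * a m) := by
    simp only [ZgtVal, a, m]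
    ring
  rw [hZ, abs_mul, abs_of_nonneg (cscale_nonneg N)]
  refine mul_le_mul_of_nonneg_left ?_ (cscale_nonneg N)
  exact abs_sum_range_add_mul_le (fun n => (abs_mul_mul_ite_lt (sqrt_nonneg _) _ _).le)
    (sub_nonneg.mpr (Nat.floor_le hNt)) (by linarith [Nat.lt_floor_add_one ((N : ℝ) * t)])
    (Nat.floor_le_floor (mul_le_mul_of_nonneg_left ht.2 (Nat.cast_nonneg _)))

lemma lintegral_extremalJump_succ_le (hN : 1 ≤ N) (α : Fin 2) (n : ℕ) :
    ∫⁻ ω, ENNReal.ofReal (S.extremalJump N α (n + 1) ω) ∂S.Pr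
      ≤ ENNReal.ofReal (π / (16 * √N)) := by
  have hsN : 0 < √(N : ℝ) := sqrt_pos.mpr (by exact_mod_cast hN)
  set g : T2 × ℝ → ℝ≥0∞ := fun p => ENNReal.ofReal ((Ioi √N).indicator id (p.2 * |psiC α p.1|))
  have hg : Measurable g :=
    ((measurable_id.indicator measurableSet_Ioi).comp
      (measurable_snd.mul ((measurable_psiC α).comp measurable_fst).abs)).ennreal_ofReal
  calc ∫⁻ ω, ENNReal.ofReal (S.extremalJump N α (n + 1) ω) ∂S.Pr
      = ∫⁻ ω, ∫⁻ z, g (S.X (n + 1) ω, z) ∂expMeasure ∂S.Pr := S.lintegral_comp_X_e (n + 1) hg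
    _ ≤ ∫⁻ k, (∫⁻ z, g (k, z) ∂expMeasure) * ENNReal.ofReal (2 * sinSqSum k) :=
        S.lintegral_comp_X_succ_le n hg.lintegral_prod_right'
    _ ≤ ∫⁻ k, ENNReal.ofReal (exp (-(4 * √N * sinSqSum k))) :=
        lintegral_mono fun k => lintegral_indicator_mul_abs_psiC_mul_le α k hsN.le
    _ ≤ ENNReal.ofReal (π / (4 * (4 * √N))) := lintegral_exp_neg_mul_sinSqSum_le (by positivity)
    _ = ENNReal.ofReal (π / (16 * √N)) := by ring_nf

lemma measure_head_le {δ' : ℝ} (hδ' : 0 < δ') :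
    S.Pr {ω | ∃ α, √N < S.e 0 ω * |psiC α (S.X 0 ω)|}
      ≤ S.μ0 {k | ‖k‖ < δ'} + ENNReal.ofReal (exp (-(32 * δ' ^ 2 * √N))) := by
  have hsub : {ω | ∃ α, √N < S.e 0 ω * |psiC α (S.X 0 ω)|}
      ⊆ S.X 0 ⁻¹' {k | ‖k‖ < δ'} ∪ S.e 0 ⁻¹' Ioi (32 * δ' ^ 2 * √N) := by
    rintro ω ⟨α, hα⟩
    by_contra hnot
    simp only [mem_union, mem_preimage, mem_ofPred_eq, mem_Ioi, not_or, not_lt] at hnot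
    exact (mul_abs_psiC_le_of_le_norm α hδ' hnot.1 (sqrt_nonneg _) hnot.2).not_gt hα
  calc _ ≤ _ := measure_mono hsub
    _ ≤ _ := measure_union_le _ _
    _ = _ := by
        rw [← Measure.map_apply (S.hX 0) (isOpen_lt continuous_norm continuous_const).measurableSet,
          S.hinit, ← Measure.map_apply (S.he 0) measurableSet_Ioi, S.heLaw 0,
          expMeasure_Ioi (by positivity)]

lemma lintegral_sum_ofReal_extremalJump_succ_le (hN : 1 ≤ N) (M : ℕ) :
    ∫⁻ ω, ∑ α, ∑ j ∈ Finset.range M, ENNReal.ofReal (S.extremalJump N α (j + 1) ω) ∂S.Pr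
      ≤ ENNReal.ofReal (M * (π / (8 * √N))) := by
  have hJ : ∀ α j, Measurable fun ω => ENNReal.ofReal (S.extremalJump N α (j + 1) ω) :=
    fun α j => (S.measurable_extremalJump N α (j + 1)).ennreal_ofReal
  calc _ = ∑ α, ∑ j ∈ Finset.range M,
          ∫⁻ ω, ENNReal.ofReal (S.extremalJump N α (j + 1) ω) ∂S.Pr := by
        rw [lintegral_finsetSum _ fun α _ => Finset.measurable_sum _ fun j _ => hJ α j]
        exact Finset.sum_congr rfl fun α _ => lintegral_finsetSum _ fun j _ => hJ α j
    _ ≤ ∑ _α : Fin 2, ∑ _j ∈ Finset.range M, ENNReal.ofReal (π / (16 * √N)) := by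
        gcongr with α _ j
        exact S.lintegral_extremalJump_succ_le N hN α j
    _ = ENNReal.ofReal (M * (π / (8 * √N))) := by
        simp only [Finset.sum_const, Finset.card_range, Finset.card_univ, Fintype.card_fin,
          Nat.cast_ofNat, nsmul_eq_mul]
        rw [show (M : ℝ) * (π / (8 * √N)) = 2 * (M * (π / (16 * √N))) by ring,
          ENNReal.ofReal_mul zero_le_two, ENNReal.ofReal_mul (Nat.cast_nonneg _),
          ENNReal.ofReal_ofNat, ENNReal.ofReal_natCast]

lemma measure_bulk_ge_le (hN : 1 ≤ N) {𝒯 δ : ℝ} (h𝒯 : 0 ≤ 𝒯) (hδ : 0 < δ) :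
    S.Pr {ω | δ ≤ cscale N *
        ∑ α, ∑ j ∈ Finset.range ⌊(N : ℝ) * 𝒯⌋₊, S.extremalJump N α (j + 1) ω}
      ≤ ENNReal.ofReal (π * 𝒯 / (8 * δ) / √(log N)) := by
  set M := ⌊(N : ℝ) * 𝒯⌋₊
  set F : Ω → ℝ≥0∞ := fun ω =>
    ∑ α, ∑ j ∈ Finset.range M, ENNReal.ofReal (S.extremalJump N α (j + 1) ω)
  have hF : Measurable F := Finset.measurable_sum _ fun α _ => Finset.measurable_sum _ fun j _ =>
    (S.measurable_extremalJump N α (j + 1)).ennreal_ofReal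
  have hsub : {ω | δ ≤ cscale N * ∑ α, ∑ j ∈ Finset.range M, S.extremalJump N α (j + 1) ω}
      ⊆ {ω | ENNReal.ofReal δ ≤ ENNReal.ofReal (cscale N) * F ω} := by
    intro ω hω
    have hnn : ∀ α j, 0 ≤ S.extremalJump N α (j + 1) ω := fun α j =>
      S.extremalJump_nonneg N _ _ _
    simp only [mem_ofPred_eq, F, ← ENNReal.ofReal_sum_of_nonneg fun j _ => hnn _ j,
      ← ENNReal.ofReal_sum_of_nonneg fun α _ => Finset.sum_nonneg fun j _ => hnn α j,
      ← ENNReal.ofReal_mul (cscale_nonneg N)]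
    exact ENNReal.ofReal_le_ofReal hω
  have hrate : cscale N * (M * (π / (8 * √N))) / δ ≤ π * 𝒯 / (8 * δ) / √(log N) :=
    calc cscale N * (M * (π / (8 * √N))) / δ = π / (8 * δ) * (cscale N * (M / √N)) := by ring
      _ ≤ π / (8 * δ) * (𝒯 / √(log N)) := by gcongr; exact cscale_mul_floor_div_sqrt_le h𝒯 N
      _ = π * 𝒯 / (8 * δ) / √(log N) := by ring
  calc _ ≤ S.Pr {ω | ENNReal.ofReal δ ≤ ENNReal.ofReal (cscale N) * F ω} := measure_mono hsub
    _ ≤ (∫⁻ ω, ENNReal.ofReal (cscale N) * F ω ∂S.Pr) / ENNReal.ofReal δ :=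
        meas_ge_le_lintegral_div (hF.const_mul _).aemeasurable (ENNReal.ofReal_pos.mpr hδ).ne'
          ENNReal.ofReal_ne_top
    _ ≤ ENNReal.ofReal (cscale N) * ENNReal.ofReal (M * (π / (8 * √N))) / ENNReal.ofReal δ := by
        rw [lintegral_const_mul _ hF]
        gcongr
        exact S.lintegral_sum_ofReal_extremalJump_succ_le N hN M
    _ = ENNReal.ofReal (cscale N * (M * (π / (8 * √N))) / δ) := by
        rw [← ENNReal.ofReal_mul (cscale_nonneg N), ENNReal.ofReal_div_of_pos hδ]
    _ ≤ _ := ENNReal.ofReal_le_ofReal hrate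

lemma extremal_event_subset {𝒯 δ : ℝ} {lam : Fin 2 → ℝ} (hlam : ∑ α, lam α ^ 2 = 1) :
    {ω | ∃ t ∈ Icc (0 : ℝ) 𝒯, δ < |∑ α, lam α * ZgtVal S N α t ω|}
      ⊆ {ω | ∃ α, √N < S.e 0 ω * |psiC α (S.X 0 ω)|} ∪
        {ω | δ ≤ cscale N *
          ∑ α, ∑ j ∈ Finset.range ⌊(N : ℝ) * 𝒯⌋₊, S.extremalJump N α (j + 1) ω} := by
  rintro ω ⟨t, ht, hδt⟩
  by_cases hhead : ∃ α, √N < S.e 0 ω * |psiC α (S.X 0 ω)|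
  · exact Or.inl hhead
  push Not at hhead
  have hJ₀ : ∀ α, S.extremalJump N α 0 ω = 0 := fun α =>
    indicator_of_notMem (not_lt.mpr (hhead α)) _
  refine Or.inr ?_
  calc δ ≤ |∑ α, lam α * ZgtVal S N α t ω| := hδt.le
    _ ≤ ∑ α, |ZgtVal S N α t ω| := (Finset.abs_sum_le_sum_abs _ _).trans <|
        Finset.sum_le_sum fun α _ => by
          rw [abs_mul]
          exact mul_le_of_le_one_left (abs_nonneg _) (abs_le_one_of_sum_sq_eq_one hlam α)
    _ ≤ ∑ α, cscale N *
          ∑ n ∈ Finset.range (⌊(N : ℝ) * 𝒯⌋₊ + 1), S.extremalJump N α n ω :=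
        Finset.sum_le_sum fun α _ => S.abs_ZgtVal_le N ht α ω
    _ = _ := by simp only [Finset.sum_range_succ', hJ₀, add_zero, Finset.mul_sum]

end ChainSetup

/-- **Lemma `lemmaS+`.** The extremal part vanishes:
for every `𝒯 > 0`, `δ > 0` and unit vector `λ ∈ ℝ²`,
`P[ sup_{t∈[0,𝒯]} |λ₁ Z_N^{1>}(t) + λ₂ Z_N^{2>}(t)| > δ ] → 0` as `N → ∞`. -/
theorem extremal_part_vanishes (S : ChainSetup Ω) (𝒯 : ℝ) (h𝒯 : 0 < 𝒯)
    (δ : ℝ) (hδ : 0 < δ) (lam : Fin 2 → ℝ) (hlam : ∑ α, lam α ^ 2 = 1) :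
    Tendsto (fun N : ℕ =>
        S.Pr {ω | ∃ t ∈ Set.Icc (0:ℝ) 𝒯, δ < |∑ α, lam α * ZgtVal S N α t ω|})
      atTop (nhds 0) := by
  refine tendsto_zero_of_forall_eventually_le_ofReal_add fun ε hε => ?_
  obtain ⟨δ', hδ', hsmall⟩ := S.hμ0small ε hε
  refine ⟨_, tendsto_ofReal_exp_neg_mul_sqrt_add_ofReal_div_sqrt_log (c := π * 𝒯 / (8 * δ))
    (by positivity : 0 < 32 * δ' ^ 2), ?_⟩
  filter_upwards [eventually_ge_atTop 1] with N hN
  calc _ ≤ S.Pr {ω | ∃ α, √N < S.e 0 ω * |psiC α (S.X 0 ω)|} +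
        S.Pr {ω | δ ≤ cscale N *
          ∑ α, ∑ j ∈ Finset.range ⌊(N : ℝ) * 𝒯⌋₊, S.extremalJump N α (j + 1) ω} :=
        (measure_mono (S.extremal_event_subset N hlam)).trans (measure_union_le _ _)
    _ ≤ S.μ0 {k | ‖k‖ < δ'} + ENNReal.ofReal (exp (-(32 * δ' ^ 2 * √N))) +
        ENNReal.ofReal (π * 𝒯 / (8 * δ) / √(log N)) :=
        add_le_add (S.measure_head_le N hδ') (S.measure_bulk_ge_le N hN h𝒯.le hδ)
    _ ≤ _ := by
        rw [add_assoc]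
        gcongr

end
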